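/- Let S ⊆ H with |S| > 1 and h_0 ∈ S with π_S(h_0) > 1/2, let R = S \ {h_0}, and let T* be any query tree whose leaves contain S. If q_j maximizes the shrinkage-cost ratio, i.e. Δ_j(S, π_S)/c_j ≥ Δ_i(S, π_S)/c_i for all questions q_i (as the greedy tree's chosen question at S does), then δ_j / c_j ≥ 1 / (2 · C*(h_0)). -/

import Mathlib

open Finset

namespace ActiveLearning

variable {H A : Type*} {m : ℕ}

/-- The total mass of a weight function `v` on a finite set `S`. -/
def mass (v : H → ℝ) (S : Finset H) : ℝ := ∑ s ∈ S, v s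

/-- `v` restricted to `S` and normalized. -/
noncomputable def restrict [DecidableEq H] (v : H → ℝ) (S : Finset H) : H → ℝ :=
  fun h => if h ∈ S then v h / mass v S else 0

/-- The shrinkage `Δ` of a question `qi` on `(S, v)`. -/
noncomputable def shrink [Fintype A] [DecidableEq A] (qi : H → A)
    (S : Finset H) (v : H → ℝ) : ℝ :=
  mass v S - ∑ j : A, (mass v (S.filter fun s => qi s = j)) ^ 2 / mass v S

/-- The collision probability of a distribution `v`. -/
def CP [Fintype H] (v : H → ℝ) : ℝ := ∑ z : H, (v z) ^ 2

/-- Query trees: internal nodes are questions (indexed by `Fin m`), branches are answers,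
leaves are hypotheses. -/
inductive QTree (m : ℕ) (H A : Type*) : Type _
  | leaf : H → QTree m H A
  | node : Fin m → (A → QTree m H A) → QTree m H A

/-- Follow the answers of hypothesis `h` down the tree, returning the leaf reached. -/
def follow (q : Fin m → H → A) : QTree m H A → H → H
  | .leaf h', _ => h'
  | .node i ch, h => follow q (ch (q i h)) h

/-- The cost `c_T(h)`: sum of costs of the questions on the root-to-`h` path. -/
def pathCost (q : Fin m → H → A) (c : Fin m → ℝ) : QTree m H A → H → ℝ
  | .leaf _, _ => 0
  | .node i ch, h => c i + pathCost q c (ch (q i h)) h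

/-- The leaves of `T` include `S`: every `h ∈ S` is identified by `T`. -/
def ValidOn (q : Fin m → H → A) (T : QTree m H A) (S : Finset H) : Prop :=
  ∀ h ∈ S, follow q T h = h

/-- The expected cost `C(T, v)` of a query tree `T` under weights `v`. -/
noncomputable def treeCost [Fintype H] (q : Fin m → H → A) (c : Fin m → ℝ)
    (T : QTree m H A) (v : H → ℝ) : ℝ :=
  ∑ h : H, v h * pathCost q c T h

/-- The questions asked along the root-to-`h` path. -/
def pathQs (q : Fin m → H → A) : QTree m H A → H → List (Fin m)
  | .leaf _, _ => []
  | .node i ch, h => i :: pathQs q (ch (q i h)) h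

/-- `T` is a greedy query tree for `π` on version space `S`: at every node it asks a question
maximizing the shrinkage-cost ratio and recurses on each nonempty answer class. -/
inductive IsGreedy [Fintype A] [DecidableEq A] [DecidableEq H]
    (q : Fin m → H → A) (c : Fin m → ℝ) (π : H → ℝ) :
    QTree m H A → Finset H → Prop
  | leaf (h : H) : IsGreedy q c π (.leaf h) {h}
  | node (S : Finset H) (i : Fin m) (ch : A → QTree m H A)
      (hcard : 1 < S.card)
      (hmax : ∀ j : Fin m,
        shrink (q j) S (restrict π S) / c j ≤ shrink (q i) S (restrict π S) / c i)
      (hch : ∀ a : A, (S.filter fun s => q i s = a).Nonempty →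
        IsGreedy q c π (ch a) (S.filter fun s => q i s = a)) :
      IsGreedy q c π (.node i ch) S

/-- `T` is an `ε`-approximate greedy query tree for `π` on version space `S`. -/
inductive IsApproxGreedy [Fintype A] [DecidableEq A] [DecidableEq H]
    (ε : ℝ) (q : Fin m → H → A) (c : Fin m → ℝ) (π : H → ℝ) :
    QTree m H A → Finset H → Prop
  | leaf (h : H) : IsApproxGreedy ε q c π (.leaf h) {h}
  | node (S : Finset H) (i : Fin m) (ch : A → QTree m H A)
      (hcard : 1 < S.card)
      (happrox : ∀ j : Fin m,
        (1 - ε) * (shrink (q j) S (restrict π S) / c j) ≤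
          shrink (q i) S (restrict π S) / c i)
      (hch : ∀ a : A, (S.filter fun s => q i s = a).Nonempty →
        IsApproxGreedy ε q c π (ch a) (S.filter fun s => q i s = a)) :
      IsApproxGreedy ε q c π (.node i ch) S

/-- `T` is irreducible on version space `S`: every asked question strictly splits the
surviving set. -/
inductive Irreducible [DecidableEq A] (q : Fin m → H → A) :
    QTree m H A → Finset H → Prop
  | leaf (h : H) (S : Finset H) : Irreducible q (.leaf h) S
  | node (S : Finset H) (i : Fin m) (ch : A → QTree m H A)
      (hsplit : ∃ s ∈ S, ∃ t ∈ S, q i s ≠ q i t)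
      (hch : ∀ a : A, (S.filter fun s => q i s = a).Nonempty →
        Irreducible q (ch a) (S.filter fun s => q i s = a)) :
      Irreducible q (.node i ch) S


/-! Write `d_i` for the `π_S`-mass of the elements of `S` that `q_i` separates from `h_0`, so that
`d_i = ρ δ_i` with `ρ = π(R)/π(S)`. Since the answer class of `h_0` carries mass at least `1/2`,
the shrinkage is squeezed between `d_i` and `2 d_i`. On the other hand, the questions on the path
of `h_0` in `T*` separate `h_0` from every element of `R`, so their `δ_i` sum to at least `1`; by
averaging one of them has `c_i ≤ δ_i C*(h_0)`. Comparing its shrinkage-cost ratio with that of the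
maximizer `q_j` gives the bound. -/

lemma sum_toFinset_le_sum_map {α : Type*} [DecidableEq α] {f : α → ℝ} (hf : ∀ a, 0 ≤ f a)
    (l : List α) : ∑ a ∈ l.toFinset, f a ≤ (l.map f).sum := by
  induction l with
  | nil => simp
  | cons a l ih =>
    rw [List.toFinset_cons, List.map_cons, List.sum_cons]
    by_cases ha : a ∈ l.toFinset
    · rw [insert_eq_of_mem ha]; linarith [hf a]
    · rw [sum_insert ha]; linarith

lemma sum_le_sum_sum_filter_of_forall_exists {ι α : Type*} {F : Finset ι} {R : Finset α}
    {p : ι → α → Prop} [∀ i, DecidablePred (p i)] {f : α → ℝ} (hf : ∀ r ∈ R, 0 ≤ f r)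
    (hcover : ∀ r ∈ R, ∃ i ∈ F, p i r) :
    ∑ r ∈ R, f r ≤ ∑ i ∈ F, ∑ r ∈ R with p i r, f r :=
  calc ∑ r ∈ R, f r ≤ ∑ r ∈ R, ∑ i ∈ F with p i r, f r := sum_le_sum fun r hr => by
        obtain ⟨i, hi, hpi⟩ := hcover r hr
        exact single_le_sum (f := fun _ => f r) (fun _ _ => hf r hr) (mem_filter.2 ⟨hi, hpi⟩)
    _ = ∑ i ∈ F, ∑ r ∈ R with p i r, f r := by simp_rw [sum_filter]; exact sum_comm

lemma mass_pos {v : H → ℝ} {S : Finset H} (hv : ∀ h, 0 < v h) (hS : S.Nonempty) :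
    0 < mass v S :=
  sum_pos (fun s _ => hv s) hS

section Mass

variable [DecidableEq H] {v : H → ℝ} {S T : Finset H}

lemma restrict_nonneg (hv : ∀ h, 0 ≤ v h) (h : H) : 0 ≤ restrict v S h := by
  unfold restrict
  split_ifs
  · exact div_nonneg (hv h) (sum_nonneg fun s _ => hv s)
  · exact le_rfl

lemma mass_restrict_of_subset (hTS : T ⊆ S) : mass (restrict v S) T = mass v T / mass v S := by
  rw [mass, mass, sum_div]
  exact sum_congr rfl fun s hs => if_pos (hTS hs)

lemma mass_restrict_self (hS : mass v S ≠ 0) : mass (restrict v S) S = 1 := by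
  rw [mass_restrict_of_subset subset_rfl, div_self hS]

lemma mass_restrict_eq_mul_mass_restrict {R : Finset H} (hTR : T ⊆ R) (hRS : R ⊆ S)
    (hR : mass v R ≠ 0) :
    mass (restrict v S) T = mass v R / mass v S * mass (restrict v R) T := by
  rw [mass_restrict_of_subset (hTR.trans hRS), mass_restrict_of_subset hTR]
  field_simp

lemma mass_restrict_filter_ne [DecidableEq A] (f : H → A) (h0 : H)
    (hR : mass v (S.erase h0) ≠ 0) :
    mass (restrict v S) (S.filter fun s => f s ≠ f h0) = mass v (S.erase h0) / mass v S *
      mass (restrict v (S.erase h0)) ((S.erase h0).filter fun r => f r ≠ f h0) := by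
  have hD : (S.erase h0).filter (fun r => f r ≠ f h0) = S.filter (fun s => f s ≠ f h0) := by
    rw [filter_erase, erase_eq_of_notMem (by simp)]
  rw [← hD]
  exact mass_restrict_eq_mul_mass_restrict (filter_subset _ _) (erase_subset _ _) hR

end Mass

section Shrinkage

variable [DecidableEq A] (f : H → A) {v : H → ℝ} {S : Finset H}

lemma sum_mass_filter_eq [Fintype A] (S : Finset H) :
    ∑ a : A, mass v (S.filter fun s => f s = a) = mass v S :=
  sum_fiberwise_of_maps_to (fun s _ => mem_univ (f s)) v

lemma mass_filter_eq_add_mass_filter_ne (S : Finset H) (h0 : H) :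
    mass v (S.filter fun s => f s = f h0) + mass v (S.filter fun s => f s ≠ f h0) = mass v S :=
  sum_filter_add_sum_filter_not S _ v

lemma shrink_of_mass_eq_one [Fintype A] (hS : mass v S = 1) :
    shrink f S v = 1 - ∑ a : A, mass v (S.filter fun s => f s = a) ^ 2 := by
  simp [shrink, hS]

lemma shrink_le_two_mul_mass_filter_ne [Fintype A] (hS : mass v S = 1) (h0 : H) :
    shrink f S v ≤ 2 * mass v (S.filter fun s => f s ≠ f h0) := by
  have hsq : mass v (S.filter fun s => f s = f h0) ^ 2 ≤
      ∑ a : A, mass v (S.filter fun s => f s = a) ^ 2 :=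
    single_le_sum (f := fun a => mass v (S.filter fun s => f s = a) ^ 2)
      (fun a _ => sq_nonneg _) (mem_univ _)
  have hsplit := mass_filter_eq_add_mass_filter_ne (v := v) f S h0
  rw [shrink_of_mass_eq_one f hS]
  nlinarith [sq_nonneg (mass v (S.filter fun s => f s ≠ f h0))]

lemma mass_filter_ne_le_shrink [Fintype A] (hv : ∀ s ∈ S, 0 ≤ v s) (hS : mass v S = 1) (h0 : H)
    (hh0 : 1 / 2 ≤ mass v (S.filter fun s => f s = f h0)) :
    mass v (S.filter fun s => f s ≠ f h0) ≤ shrink f S v := by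
  set x : A → ℝ := fun a => mass v (S.filter fun s => f s = a)
  have hsplit := mass_filter_eq_add_mass_filter_ne (v := v) f S h0
  have hx_nonneg (a : A) : 0 ≤ x a := sum_nonneg fun s hs => hv s (mem_of_mem_filter s hs)
  -- a class other than that of `h_0` has mass at most `1 - x (f h0) ≤ 1 / 2`
  have hx_le (a : A) : x a ≤ x (f h0) := by
    by_cases ha : a = f h0
    · rw [ha]
    · have : x a ≤ mass v (S.filter fun s => f s ≠ f h0) := by
        refine sum_le_sum_of_subset_of_nonneg (fun s hs => ?_)
          fun s hs _ => hv s (mem_of_mem_filter s hs)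
        rw [mem_filter] at hs ⊢
        exact ⟨hs.1, hs.2 ▸ ha⟩
      linarith
  have hsq : ∑ a : A, x a ^ 2 ≤ x (f h0) :=
    calc ∑ a : A, x a ^ 2 ≤ ∑ a : A, x (f h0) * x a :=
          sum_le_sum fun a _ => by rw [sq]; exact mul_le_mul_of_nonneg_right (hx_le a) (hx_nonneg a)
      _ = x (f h0) := by rw [← mul_sum, sum_mass_filter_eq, hS, mul_one]
  rw [shrink_of_mass_eq_one f hS]
  linarith

end Shrinkage

section Trees

variable {q : Fin m → H → A} {c : Fin m → ℝ}

lemma pathCost_eq_sum_map (T : QTree m H A) (h : H) :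
    pathCost q c T h = ((pathQs q T h).map c).sum := by
  induction T with
  | leaf => rfl
  | node i ch ih => simp [pathCost, pathQs, ih]

lemma exists_mem_pathQs_ne_of_follow_eq {T : QTree m H A} {h0 r : H} (hr : r ≠ h0)
    (hfh0 : follow q T h0 = h0) (hfr : follow q T r = r) :
    ∃ i ∈ pathQs q T h0, q i r ≠ q i h0 := by
  induction T with
  | leaf h' => exact absurd (hfr.symm.trans hfh0) hr
  | node i ch ih =>
    by_cases hq : q i r = q i h0
    · simp only [follow] at hfh0 hfr
      obtain ⟨k, hk, hne⟩ := ih (q i h0) hfh0 (hq ▸ hfr)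
      exact ⟨k, List.mem_cons_of_mem i hk, hne⟩
    · exact ⟨i, List.mem_cons_self, hq⟩

end Trees

lemma exists_cost_mul_mass_le_mul_pathCost [DecidableEq A] [DecidableEq H] {q : Fin m → H → A}
    {c : Fin m → ℝ} (hc : ∀ i, 0 ≤ c i) {w : H → ℝ} (hw : ∀ h, 0 ≤ w h) {T : QTree m H A}
    {S : Finset H} (hT : ValidOn q T S) {h0 : H} (h0S : h0 ∈ S)
    (hR : 0 < mass w (S.erase h0)) :
    ∃ i, c i * mass w (S.erase h0) ≤
      mass w ((S.erase h0).filter fun r => q i r ≠ q i h0) * pathCost q c T h0 := by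
  set F := (pathQs q T h0).toFinset
  set δ : Fin m → ℝ := fun i => mass w ((S.erase h0).filter fun r => q i r ≠ q i h0)
  have hcover : mass w (S.erase h0) ≤ ∑ i ∈ F, δ i :=
    sum_le_sum_sum_filter_of_forall_exists (fun r _ => hw r) fun r hr => by
      obtain ⟨i, hi, hne⟩ := exists_mem_pathQs_ne_of_follow_eq (ne_of_mem_erase hr)
        (hT h0 h0S) (hT r (mem_of_mem_erase hr))
      exact ⟨i, List.mem_toFinset.2 hi, hne⟩
  have hF : F.Nonempty := by
    by_contra hF
    rw [not_nonempty_iff_eq_empty.1 hF, sum_empty] at hcover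
    linarith
  have hcostF : ∑ i ∈ F, c i ≤ pathCost q c T h0 := by
    rw [pathCost_eq_sum_map]; exact sum_toFinset_le_sum_map hc _
  have hC : 0 ≤ pathCost q c T h0 := (sum_nonneg fun i _ => hc i).trans hcostF
  obtain ⟨i, -, hi⟩ := exists_le_of_sum_le hF <| calc
    ∑ i ∈ F, c i * mass w (S.erase h0) ≤ pathCost q c T h0 * mass w (S.erase h0) := by
        rw [← sum_mul]; gcongr
    _ ≤ pathCost q c T h0 * ∑ i ∈ F, δ i := by gcongr
    _ = ∑ i ∈ F, δ i * pathCost q c T h0 := by rw [mul_sum]; simp_rw [mul_comm]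
  exact ⟨i, hi⟩

theorem greedy_separates_general [Fintype H] [Fintype A] [DecidableEq H] [DecidableEq A]
    (π : H → ℝ) (hπpos : ∀ h, 0 < π h)
    (q : Fin m → H → A) (c : Fin m → ℝ) (hc : ∀ i, 0 < c i)
    (S : Finset H) (hS : 1 < S.card)
    (h0 : H) (h0S : h0 ∈ S) (hh0 : 1 / 2 < restrict π S h0)
    (Tstar : QTree m H A) (hTstar : ValidOn q Tstar S)
    (j : Fin m)
    (hmax : ∀ i : Fin m,
      shrink (q i) S (restrict π S) / c i ≤ shrink (q j) S (restrict π S) / c j) :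
    1 / (2 * pathCost q c Tstar h0) ≤
      mass (restrict π (S.erase h0))
        ((S.erase h0).filter fun r => q j r ≠ q j h0) / c j := by
  set R := S.erase h0
  set C := pathCost q c Tstar h0
  set δ : Fin m → ℝ := fun i => mass (restrict π R) (R.filter fun r => q i r ≠ q i h0)
  have hmS : 0 < mass π S := mass_pos hπpos (card_pos.1 (by omega))
  have hmR : 0 < mass π R := mass_pos hπpos (card_pos.1 (by rw [card_erase_of_mem h0S]; omega))
  set ρ := mass π R / mass π S
  have hρ : 0 < ρ := div_pos hmR hmS
  have hπ (h : H) : 0 ≤ π h := (hπpos h).le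
  have hmassS : mass (restrict π S) S = 1 := mass_restrict_self hmS.ne'
  have hmassR : mass (restrict π R) R = 1 := mass_restrict_self hmR.ne'
  obtain ⟨i, hi⟩ := exists_cost_mul_mass_le_mul_pathCost (fun i => (hc i).le)
    (restrict_nonneg hπ) hTstar h0S (hmassR ▸ one_pos)
  rw [hmassR, mul_one] at hi
  have hΔi : ρ * δ i ≤ shrink (q i) S (restrict π S) := by
    rw [← mass_restrict_filter_ne _ h0 hmR.ne']
    refine mass_filter_ne_le_shrink _ (fun s _ => restrict_nonneg hπ s) hmassS h0 (hh0.le.trans ?_)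
    exact single_le_sum (fun s _ => restrict_nonneg hπ s) (mem_filter.2 ⟨h0S, rfl⟩)
  have hΔj : shrink (q j) S (restrict π S) ≤ 2 * (ρ * δ j) :=
    mass_restrict_filter_ne (q j) h0 hmR.ne' ▸ shrink_le_two_mul_mass_filter_ne _ hmassS h0
  have hδi : 0 ≤ δ i := sum_nonneg fun s _ => restrict_nonneg hπ s
  have hC : 0 < C := pos_of_mul_pos_right ((hc i).trans_le hi) hδi
  calc 1 / (2 * C) ≤ δ i / (2 * c i) := by
        rw [div_le_div_iff₀ (by positivity) (by linarith [hc i])]; linarith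
    _ = ρ * δ i / c i / (2 * ρ) := by field_simp
    _ ≤ shrink (q i) S (restrict π S) / c i / (2 * ρ) := by gcongr; exact (hc i).le
    _ ≤ shrink (q j) S (restrict π S) / c j / (2 * ρ) :=
        div_le_div_of_nonneg_right (hmax i) (by positivity)
    _ ≤ 2 * (ρ * δ j) / c j / (2 * ρ) := by gcongr; exact (hc j).le
    _ = δ j / c j := by field_simp

/-- If `h_0 ∈ S` has `π_S(h_0) > 1/2`, `T*` is any query tree whose leaves
contain `S`, and `q_j` maximizes the shrinkage-cost ratio on `S`, then
`δ_j / c_j ≥ 1 / (2 · C*(h_0))`. -/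
theorem greedy_separates [Fintype H] [Fintype A] [DecidableEq H] [DecidableEq A]
    (π : H → ℝ) (hπpos : ∀ h, 0 < π h) (hπsum : ∑ h : H, π h = 1)
    (hH : 1 < Fintype.card H)
    (q : Fin m → H → A) (c : Fin m → ℝ) (hc : ∀ i, 0 < c i)
    (S : Finset H) (hS : 1 < S.card)
    (h0 : H) (h0S : h0 ∈ S) (hh0 : 1 / 2 < restrict π S h0)
    (Tstar : QTree m H A) (hTstar : ValidOn q Tstar S)
    (j : Fin m)
    (hmax : ∀ i : Fin m,
      shrink (q i) S (restrict π S) / c i ≤ shrink (q j) S (restrict π S) / c j) :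
    1 / (2 * pathCost q c Tstar h0) ≤
      mass (restrict π (S.erase h0))
        ((S.erase h0).filter fun r => q j r ≠ q j h0) / c j :=
  greedy_separates_general π hπpos q c hc S hS h0 h0S hh0 Tstar hTstar j hmax

end ActiveLearning
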